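/- For each nonnegative integer n, the function Ψₙ(x) = (2ⁿ n! μ √π)^{-1/2} exp(i(αx² + δx + κ) − (βx + ε)²/2) Hₙ(βx + ε), where Hₙ is the n-th Hermite polynomial and β > 0, μ > 0, satisfies E Ψₙ = λ(n + 1/2) Ψₙ, where E = (λ/2)[ (p − 2αx − δ)²/β² + (βx + ε)² ] with p = −i d/dx. -/

import Mathlib

open Complex

/-- Physicists' Hermite polynomials: `H₀ = 1`, `H₁ = 2x`,
`Hₙ₊₂ = 2x Hₙ₊₁ − 2(n+1) Hₙ`. -/
noncomputable def physHermite : ℕ → ℝ → ℝ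
  | 0 => fun _ => 1
  | 1 => fun x => 2 * x
  | (n + 2) => fun x => 2 * x * physHermite (n + 1) x - 2 * (n + 1) * physHermite n x

/-- Momentum operator `p = -i d/dx`. -/
noncomputable def momOp (ψ : ℝ → ℂ) : ℝ → ℂ := fun x => -Complex.I * deriv ψ x

/-- The first-order operator `A = p − 2αx − δ`. -/
noncomputable def linOp (α δ : ℝ) (ψ : ℝ → ℂ) : ℝ → ℂ := fun x =>
  momOp ψ x - 2 * α * x * ψ x - δ * ψ x

/-- The eigenfunctions `Ψₙ` of the quadratic invariant. -/
noncomputable def PsiN (α β δ ε κ μ : ℝ) (n : ℕ) : ℝ → ℂ := fun x =>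
  (Real.sqrt (2 ^ n * n.factorial * μ * Real.sqrt Real.pi) : ℂ)⁻¹
    * Complex.exp (Complex.I * ((α : ℂ) * x ^ 2 + (δ : ℂ) * x + κ)
        - ((β : ℂ) * x + ε) ^ 2 / 2)
    * (physHermite n (β * x + ε) : ℂ)

/-- The quadratic invariant `E = (λ/2)[(p − 2αx − δ)²/β² + (βx + ε)²]`. -/
noncomputable def Einv (α β δ ε lam : ℝ) (ψ : ℝ → ℂ) : ℝ → ℂ := fun x =>
  (lam / 2 : ℂ) * (linOp α δ (linOp α δ ψ) x / (β : ℂ) ^ 2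
    + ((β : ℂ) * x + ε) ^ 2 * ψ x)

/-!
The phase `e^{iφ}`, `φ = αx² + δx + κ`, is exactly what `p − 2αx − δ` gauges away:
`(p − 2αx − δ)(e^{iφ} g) = e^{iφ} (−i g')`. So on `Ψₙ = c e^{iφ} hₙ(βx + ε)`, with the Hermite
function `hₙ = e^{−ξ²/2} Hₙ`, the invariant acts as the oscillator `(λ/2)(−d²/dξ² + ξ²)` in
`ξ = βx + ε`. The raising relation `hₙ' = ξ hₙ − hₙ₊₁` (from `Hₙ' = 2ξ Hₙ − Hₙ₊₁`) combined with
the three-term recurrence gives `hₙ'' = (ξ² − 2n − 1) hₙ`, whence the eigenvalue `λ(n + 1/2)`.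
-/

theorem hasDerivAt_ofReal_comp_affine {f : ℝ → ℝ} {f' β ε y : ℝ}
    (hf : HasDerivAt f f' (β * y + ε)) :
    HasDerivAt (fun y => (f (β * y + ε) : ℂ)) ((β * f' : ℝ) : ℂ) y :=
  (hf.comp y (((hasDerivAt_id' y).const_mul β).add_const ε)).ofReal_comp.congr_deriv
    (by push_cast; ring)

theorem physHermite_add_two (n : ℕ) (x : ℝ) :
    physHermite (n + 2) x = 2 * x * physHermite (n + 1) x - 2 * (n + 1) * physHermite n x :=
  rfl

theorem hasDerivAt_physHermite : ∀ (n : ℕ) (x : ℝ),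
    HasDerivAt (physHermite n) (2 * x * physHermite n x - physHermite (n + 1) x) x
  | 0, x => by simpa [physHermite] using hasDerivAt_const x (1 : ℝ)
  | 1, x => by
    simpa [physHermite] using ((hasDerivAt_id' x).const_mul 2).congr_deriv (by ring)
  | n + 2, x => by
    have h := (((hasDerivAt_id' x).const_mul 2).fun_mul (hasDerivAt_physHermite (n + 1) x)).fun_sub
      ((hasDerivAt_physHermite n x).const_mul (2 * ((n : ℝ) + 1)))
    rw [show physHermite (n + 2) = _ from funext (physHermite_add_two n)]
    refine h.congr_deriv ?_
    rw [physHermite_add_two (n + 1), physHermite_add_two n]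
    push_cast
    ring

noncomputable def hermiteFun (n : ℕ) (ξ : ℝ) : ℝ := Real.exp (-ξ ^ 2 / 2) * physHermite n ξ

theorem hermiteFun_add_two (n : ℕ) (ξ : ℝ) :
    hermiteFun (n + 2) ξ = 2 * ξ * hermiteFun (n + 1) ξ - 2 * (n + 1) * hermiteFun n ξ := by
  simp only [hermiteFun, physHermite_add_two]
  ring

theorem hasDerivAt_hermiteFun (n : ℕ) (ξ : ℝ) :
    HasDerivAt (hermiteFun n) (ξ * hermiteFun n ξ - hermiteFun (n + 1) ξ) ξ := by
  have hexponent : HasDerivAt (fun ξ : ℝ => -ξ ^ 2 / 2) (-ξ) ξ :=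
    (((hasDerivAt_id' ξ).fun_pow 2).fun_neg.div_const 2).congr_deriv (by norm_num; ring)
  exact (hexponent.exp.fun_mul (hasDerivAt_physHermite n ξ)).congr_deriv
    (by simp only [hermiteFun]; ring)

theorem hasDerivAt_deriv_hermiteFun (n : ℕ) (ξ : ℝ) :
    HasDerivAt (fun ξ => ξ * hermiteFun n ξ - hermiteFun (n + 1) ξ)
      ((ξ ^ 2 - (2 * n + 1)) * hermiteFun n ξ) ξ := by
  refine (((hasDerivAt_id' ξ).fun_mul (hasDerivAt_hermiteFun n ξ)).fun_sub
    (hasDerivAt_hermiteFun (n + 1) ξ)).congr_deriv ?_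
  rw [hermiteFun_add_two]
  ring

noncomputable def quadPhase (α δ κ : ℝ) (x : ℝ) : ℂ :=
  cexp (I * ((α : ℂ) * x ^ 2 + (δ : ℂ) * x + κ))

theorem hasDerivAt_quadPhase (α δ κ x : ℝ) :
    HasDerivAt (quadPhase α δ κ) (quadPhase α δ κ x * (I * (2 * α * x + δ))) x := by
  have hx : HasDerivAt (fun y : ℝ => (y : ℂ)) 1 x := (hasDerivAt_id' x).ofReal_comp
  have hexponent : HasDerivAt (fun y : ℝ => I * ((α : ℂ) * y ^ 2 + δ * y + κ))
      (I * (2 * α * x + δ)) x := by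
    refine ((((hx.fun_pow 2).const_mul (α : ℂ)).fun_add (hx.const_mul (δ : ℂ))).add_const
      (κ : ℂ)).const_mul I |>.congr_deriv ?_
    push_cast
    ring
  exact hexponent.cexp

theorem linOp_quadPhase_mul (α δ κ : ℝ) {g : ℝ → ℂ} {g' : ℂ} {x : ℝ}
    (hg : HasDerivAt g g' x) :
    linOp α δ (fun y => quadPhase α δ κ y * g y) x = quadPhase α δ κ x * (-I * g') := by
  simp only [linOp, momOp, ((hasDerivAt_quadPhase α δ κ x).fun_mul hg).deriv]
  linear_combination (-(2 * (α : ℂ) * x + δ) * quadPhase α δ κ x * g x) * I_sq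

theorem linOp_linOp_quadPhase_mul (α δ κ : ℝ) {g g' : ℝ → ℂ} {g'' : ℂ} {x : ℝ}
    (hg : ∀ y, HasDerivAt g (g' y) y) (hg' : HasDerivAt g' g'' x) :
    linOp α δ (linOp α δ (fun y => quadPhase α δ κ y * g y)) x
      = -(quadPhase α δ κ x * g'') := by
  have hinner : linOp α δ (fun y => quadPhase α δ κ y * g y)
      = fun y => quadPhase α δ κ y * (-I * g' y) :=
    funext fun y => linOp_quadPhase_mul α δ κ (hg y)
  rw [hinner, linOp_quadPhase_mul α δ κ (hg'.const_mul (-I))]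
  linear_combination quadPhase α δ κ x * g'' * I_sq

theorem PsiN_eq_quadPhase_mul (α β δ ε κ μ : ℝ) (n : ℕ) :
    PsiN α β δ ε κ μ n = fun x => quadPhase α δ κ x *
      ((Real.sqrt (2 ^ n * n.factorial * μ * Real.sqrt Real.pi) : ℂ)⁻¹
        * (hermiteFun n (β * x + ε) : ℂ)) := by
  funext x
  simp only [PsiN, quadPhase, hermiteFun, sub_eq_add_neg, Complex.exp_add]
  push_cast [neg_div]
  ring

theorem invariant_eigenvalue_general (α β δ ε κ μ lam : ℝ) (hβ : 0 < β)
    (n : ℕ) (x : ℝ) :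
    Einv α β δ ε lam (PsiN α β δ ε κ μ n) x
      = (lam : ℂ) * ((n : ℂ) + 1 / 2) * PsiN α β δ ε κ μ n x := by
  set C : ℂ := (Real.sqrt (2 ^ n * n.factorial * μ * Real.sqrt Real.pi) : ℂ)⁻¹
  have hg (y : ℝ) :=
    (hasDerivAt_ofReal_comp_affine (hasDerivAt_hermiteFun n (β * y + ε))).const_mul C
  have hg' := (hasDerivAt_ofReal_comp_affine
    ((hasDerivAt_deriv_hermiteFun n (β * x + ε)).const_mul β)).const_mul C
  have hβ' : (β : ℂ) ≠ 0 := by exact_mod_cast hβ.ne'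
  simp only [Einv]
  rw [PsiN_eq_quadPhase_mul, linOp_linOp_quadPhase_mul α δ κ hg hg']
  field_simp
  push_cast
  ring

/-- `E Ψₙ = λ(n + 1/2) Ψₙ`. -/
theorem invariant_eigenvalue (α β δ ε κ μ lam : ℝ) (hβ : 0 < β) (hμ : 0 < μ)
    (n : ℕ) (x : ℝ) :
    Einv α β δ ε lam (PsiN α β δ ε κ μ n) x
      = (lam : ℂ) * ((n : ℂ) + 1 / 2) * PsiN α β δ ε κ μ n x :=
  invariant_eigenvalue_general α β δ ε κ μ lam hβ n x
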